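/- The dual objective of SDCut is concave: fix σ > 0, symmetric matrices A, B₁, …, B_m, b ∈ ℝ^m and η ∈ ℝ, and let C(u) = A + Σᵢ uᵢ Bᵢ. Then the function g(u) = −(1/(4σ))‖C(u)₋‖_F² − uᵀb − ση² is concave on ℝ^m. -/

import Mathlib

open Matrix

/-- The positive part `X₊ = ∑_{λᵢ > 0} λᵢ pᵢ pᵢᵀ` of a real symmetric matrix `X`,
built from an orthonormal eigenbasis `pᵢ` with eigenvalues `λᵢ` (junk value `0` if
`X` is not symmetric). -/
noncomputable def matPosPart {n : ℕ} (X : Matrix (Fin n) (Fin n) ℝ) :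
    Matrix (Fin n) (Fin n) ℝ :=
  if hX : X.IsHermitian then
    ∑ i, if 0 < hX.eigenvalues i then
      hX.eigenvalues i •
        Matrix.vecMulVec (fun j => hX.eigenvectorBasis i j) (fun j => hX.eigenvectorBasis i j)
    else 0
  else 0

/-- The negative part `X₋ = ∑_{λᵢ < 0} λᵢ pᵢ pᵢᵀ` of a real symmetric matrix `X`
(junk value `0` if `X` is not symmetric). -/
noncomputable def matNegPart {n : ℕ} (X : Matrix (Fin n) (Fin n) ℝ) :
    Matrix (Fin n) (Fin n) ℝ :=
  if hX : X.IsHermitian then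
    ∑ i, if hX.eigenvalues i < 0 then
      hX.eigenvalues i •
        Matrix.vecMulVec (fun j => hX.eigenvectorBasis i j) (fun j => hX.eigenvectorBasis i j)
    else 0
  else 0


/-!
`‖X₋‖_F²` is the squared Frobenius distance from `X` to the cone of positive semidefinite
matrices, `X₊` being the nearest point: writing `X - W = (X₊ - W) + X₋`, the cross term
`⟪X₊ - W, X₋⟫` is nonnegative because `X₊ X₋ = 0` and `⟪W, X₋⟫ ≤ 0` for every `W ⪰ 0`.
A squared distance to a convex set is convex (compare `Z₋` with `Z - (a X₊ + c Y₊)` for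
`Z = a X + c Y`), so `u ↦ ‖C(u)₋‖_F²` is convex and `g` is concave.
-/

namespace Matrix

section Frobenius

variable {m R : Type*} [Fintype m]

theorem trace_transpose_mul_comm [CommSemiring R] (M N : Matrix m m R) :
    trace (Mᵀ * N) = trace (Nᵀ * M) := by
  rw [← trace_transpose, transpose_mul, transpose_transpose]

theorem trace_transpose_mul_self_add [CommSemiring R] (M N : Matrix m m R) :
    trace ((M + N)ᵀ * (M + N)) = trace (Mᵀ * M) + 2 * trace (Mᵀ * N) + trace (Nᵀ * N) := by
  rw [transpose_add, add_mul, mul_add, mul_add, trace_add, trace_add, trace_add,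
    trace_transpose_mul_comm N M, two_mul, add_assoc, add_assoc, add_assoc]

theorem trace_transpose_mul_self_nonneg (M : Matrix m m ℝ) : 0 ≤ trace (Mᵀ * M) :=
  (posSemidef_conjTranspose_mul_self M).trace_nonneg

theorem trace_transpose_mul_self_smul_add_smul_le {a c : ℝ} (ha : 0 ≤ a) (hc : 0 ≤ c)
    (hac : a + c = 1) (M N : Matrix m m ℝ) :
    trace ((a • M + c • N)ᵀ * (a • M + c • N)) ≤ a * trace (Mᵀ * M) + c * trace (Nᵀ * N) := by
  obtain rfl : c = 1 - a := by linarith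
  have hgap : a * trace (Mᵀ * M) + (1 - a) * trace (Nᵀ * N) -
        trace ((a • M + (1 - a) • N)ᵀ * (a • M + (1 - a) • N)) =
      a * (1 - a) * trace ((M - N)ᵀ * (M - N)) := by
    simp only [sub_eq_add_neg M N, trace_transpose_mul_self_add, transpose_smul, transpose_neg,
      smul_mul_smul_comm, Matrix.neg_mul, Matrix.mul_neg, neg_neg, trace_neg, trace_smul,
      smul_eq_mul]
    ring
  linarith [mul_nonneg (mul_nonneg ha hc) (trace_transpose_mul_self_nonneg (M - N))]

open scoped MatrixOrder ComplexOrder in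
theorem PosSemidef.trace_mul_nonneg {𝕜 : Type*} [RCLike 𝕜] {A B : Matrix m m 𝕜}
    (hA : A.PosSemidef) (hB : B.PosSemidef) : 0 ≤ (A * B).trace := by
  classical
  obtain ⟨S, rfl⟩ := CStarAlgebra.nonneg_iff_eq_star_mul_self.mp hA.nonneg
  rw [mul_assoc, trace_mul_comm, star_eq_conjTranspose]
  exact (hB.mul_mul_conjTranspose_same S).trace_nonneg

end Frobenius

theorem convex_setOf_isHermitian {n 𝕜 : Type*} [RCLike 𝕜] :
    Convex ℝ {X : Matrix n n 𝕜 | X.IsHermitian} :=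
  (selfAdjoint.submodule ℝ (Matrix n n 𝕜)).convex

theorem IsHermitian.cfc_eq_sum_smul_vecMulVec {n : Type*} [Fintype n] [DecidableEq n]
    {X : Matrix n n ℝ} (hX : X.IsHermitian) (f : ℝ → ℝ) :
    cfc f X = ∑ i, f (hX.eigenvalues i) •
      vecMulVec (fun j => hX.eigenvectorBasis i j) (fun j => hX.eigenvectorBasis i j) := by
  rw [hX.cfc_eq, IsHermitian.cfc, Unitary.conjStarAlgAut_apply]
  ext i j
  simp only [diagonal, RCLike.ofReal_real_eq_id, Function.comp_apply, id_eq, mul_apply,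
    eigenvectorUnitary_apply, of_apply, mul_ite, mul_zero, Finset.sum_ite_eq', Finset.mem_univ,
    ↓reduceIte, star_apply, star_trivial, sum_apply, smul_apply, vecMulVec_apply, smul_eq_mul]
  exact Finset.sum_congr rfl fun k _ => by ring

variable {n : ℕ}

namespace IsHermitian

variable {X : Matrix (Fin n) (Fin n) ℝ} (hX : X.IsHermitian)
include hX

theorem matNegPart_eq_cfc : matNegPart X = cfc (fun x : ℝ => min x 0) X := by
  rw [matNegPart, dif_pos hX, hX.cfc_eq_sum_smul_vecMulVec]
  refine Finset.sum_congr rfl fun i _ => ?_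
  split_ifs with h
  · rw [min_eq_left h.le]
  · rw [min_eq_right (not_lt.mp h), zero_smul]

theorem matPosPart_eq_cfc : matPosPart X = cfc (fun x : ℝ => max x 0) X := by
  rw [matPosPart, dif_pos hX, hX.cfc_eq_sum_smul_vecMulVec]
  refine Finset.sum_congr rfl fun i _ => ?_
  split_ifs with h
  · rw [max_eq_left h.le]
  · rw [max_eq_right (not_lt.mp h), zero_smul]

theorem matPosPart_add_matNegPart : matPosPart X + matNegPart X = X := by
  rw [hX.matPosPart_eq_cfc, hX.matNegPart_eq_cfc, ← cfc_add ..]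
  simp only [max_add_min, add_zero]
  exact cfc_id' ℝ X

theorem matPosPart_mul_matNegPart : matPosPart X * matNegPart X = 0 := by
  rw [hX.matPosPart_eq_cfc, hX.matNegPart_eq_cfc, ← cfc_mul ..]
  simp only [max_mul_min, mul_zero]
  exact cfc_const_zero ℝ X

open scoped MatrixOrder in
theorem posSemidef_matPosPart : (matPosPart X).PosSemidef := by
  rw [hX.matPosPart_eq_cfc]
  exact (cfc_nonneg fun x _ => le_max_right x 0).posSemidef

open scoped MatrixOrder in
theorem posSemidef_neg_matNegPart : (-matNegPart X).PosSemidef := by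
  rw [hX.matNegPart_eq_cfc, ← cfc_neg]
  exact (cfc_nonneg fun x _ => neg_nonneg.mpr (min_le_right x 0)).posSemidef

theorem trace_transpose_mul_self_matNegPart_le {W : Matrix (Fin n) (Fin n) ℝ}
    (hW : W.PosSemidef) :
    trace ((matNegPart X)ᵀ * matNegPart X) ≤ trace ((X - W)ᵀ * (X - W)) := by
  have hdecomp : X - W = (matPosPart X - W) + matNegPart X := by
    linear_combination (norm := module) -hX.matPosPart_add_matNegPart
  have hPN : trace ((matPosPart X)ᵀ * matNegPart X) = 0 := by
    rw [(isHermitian_iff_isSymm.mp hX.posSemidef_matPosPart.isHermitian).eq,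
      hX.matPosPart_mul_matNegPart, trace_zero]
  have hWN : trace (Wᵀ * matNegPart X) ≤ 0 := by
    have := hW.trace_mul_nonneg hX.posSemidef_neg_matNegPart
    rw [Matrix.mul_neg, trace_neg] at this
    rw [(isHermitian_iff_isSymm.mp hW.isHermitian).eq]
    linarith
  have hcross : trace ((matPosPart X - W)ᵀ * matNegPart X) =
      trace ((matPosPart X)ᵀ * matNegPart X) - trace (Wᵀ * matNegPart X) := by
    rw [transpose_sub, sub_mul, trace_sub]
  rw [hdecomp, trace_transpose_mul_self_add]
  linarith [trace_transpose_mul_self_nonneg (matPosPart X - W)]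

end IsHermitian

theorem convexOn_trace_transpose_mul_self_matNegPart :
    ConvexOn ℝ {X : Matrix (Fin n) (Fin n) ℝ | X.IsHermitian}
      fun X => trace ((matNegPart X)ᵀ * matNegPart X) := by
  refine ⟨convex_setOf_isHermitian, fun X hX Y hY a c ha hc hac => ?_⟩
  have hW : (a • matPosPart X + c • matPosPart Y).PosSemidef :=
    (hX.posSemidef_matPosPart.smul ha).add (hY.posSemidef_matPosPart.smul hc)
  have hZW : a • X + c • Y - (a • matPosPart X + c • matPosPart Y) =
      a • matNegPart X + c • matNegPart Y := by
    linear_combination (norm := module)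
      -a • hX.matPosPart_add_matNegPart - c • hY.matPosPart_add_matNegPart
  calc _ ≤ _ := hZW ▸
        (convex_setOf_isHermitian hX hY ha hc hac).trace_transpose_mul_self_matNegPart_le hW
    _ ≤ _ := trace_transpose_mul_self_smul_add_smul_le ha hc hac _ _

end Matrix

/-- the SDCut dual objective
g(u) = −(1/(4σ))‖C(u)₋‖_F² − uᵀb − ση², with C(u) = A + ∑ᵢ uᵢ Bᵢ affine in u and
A, B₁, …, B_m symmetric, is concave on ℝᵐ. -/
theorem sdcut_dual_objective_concave {n m : ℕ} (σ η : ℝ) (hσ : 0 < σ)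
    (A : Matrix (Fin n) (Fin n) ℝ) (hA : A.IsHermitian)
    (B : Fin m → Matrix (Fin n) (Fin n) ℝ) (hB : ∀ i, (B i).IsHermitian)
    (b : Fin m → ℝ) :
    ConcaveOn ℝ Set.univ (fun u : Fin m → ℝ =>
      -(1 / (4 * σ)) *
          Matrix.trace ((matNegPart (A + ∑ i, u i • B i))ᵀ * matNegPart (A + ∑ i, u i • B i)) -
        (∑ i, u i * b i) - σ * η ^ 2) := by
  let C : (Fin m → ℝ) →ᵃ[ℝ] Matrix (Fin n) (Fin n) ℝ :=
    AffineMap.const ℝ _ A + (Fintype.linearCombination ℝ B).toAffineMap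
  have hC : ∀ u, C u = A + ∑ i, u i • B i := fun u =>
    congrArg (A + ·) (Fintype.linearCombination_apply ℝ B u)
  have hC_herm : C ⁻¹' {X | X.IsHermitian} = Set.univ :=
    Set.eq_univ_of_forall fun u => by
      rw [Set.mem_preimage, hC]
      exact hA.add (isSelfAdjoint_sum _ fun i _ => (hB i).smul (IsSelfAdjoint.all (u i)))
  have hq := convexOn_trace_transpose_mul_self_matNegPart.comp_affineMap C
  rw [hC_herm] at hq
  have hlin : ConvexOn ℝ Set.univ fun u : Fin m → ℝ => ∑ i, u i * b i + σ * η ^ 2 :=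
    ((Fintype.linearCombination ℝ b).convexOn convex_univ).add_const _
  refine ((hq.neg.smul (by positivity : (0 : ℝ) ≤ 1 / (4 * σ))).sub hlin).congr fun u _ => ?_
  simp only [Pi.sub_apply, Pi.neg_apply, Function.comp_apply, hC, smul_eq_mul]
  ring
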